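/- The inverse of the N×N matrix R with entries R_{l,m} = min(t_l, t_m), where 0 < t_1 < t_2 < ... < t_N, is a symmetric tridiagonal matrix with diagonal entries (R^{-1})_{11} = t_2/(t_1(t_2-t_1)), (R^{-1})_{jj} = (t_{j+1}-t_{j-1})/((t_j-t_{j-1})(t_{j+1}-t_j)) for 1 < j < N, (R^{-1})_{NN} = 1/(t_N-t_{N-1}), and off-diagonal entries (R^{-1})_{j,j+1} = (R^{-1})_{j+1,j} = -1/(t_{j+1}-t_j). -/

import Mathlib

/-!
Let `Δ` be the difference matrix, `(Δ g)ₖ = gₖ - gₖ₋₁` with `g₋₁ = 0`, and `L` the lower triangular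
matrix of ones, so that `L Δ = 1`. Differencing the rows of `R = (min tₗ tₘ)` gives `R Δᵀ = L D`,
where `D` is diagonal with the increments `dₖ = tₖ - tₖ₋₁` (`t₋₁ = 0`), all positive. Hence
`R Δᵀ D⁻¹ Δ = L Δ = 1`, i.e. `R⁻¹ = Δᵀ D⁻¹ Δ`, and expanding this product entrywise gives the
tridiagonal matrix of the statement.
-/

open Matrix

section

variable {α : Type*} {N : ℕ}

def natExtend [Zero α] (f : Fin N → α) (n : ℕ) : α :=
  if h : n < N then f ⟨n, h⟩ else 0

def prevValue [Zero α] (f : Fin N → α) (k : Fin N) : α :=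
  if (k : ℕ) = 0 then 0 else natExtend f (k - 1)

def diffMatrix (α : Type*) [Ring α] (N : ℕ) : Matrix (Fin N) (Fin N) α :=
  of fun k j => (if j = k then 1 else 0) - (if (j : ℕ) + 1 = k then 1 else 0)

def lowerOnes (α : Type*) [Zero α] [One α] (N : ℕ) : Matrix (Fin N) (Fin N) α :=
  of fun i j => if j ≤ i then 1 else 0

lemma natExtend_val [Zero α] (f : Fin N → α) (k : Fin N) : natExtend f k = f k := by
  simp [natExtend]

lemma natExtend_of_lt [Zero α] (f : Fin N → α) {n : ℕ} (h : n < N) :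
    natExtend f n = f ⟨n, h⟩ :=
  dif_pos h

lemma natExtend_of_le [Zero α] (f : Fin N → α) {n : ℕ} (h : N ≤ n) : natExtend f n = 0 :=
  dif_neg h.not_gt

section Ring

variable [Ring α]

lemma sum_ite_val_eq (f : Fin N → α) (n : ℕ) :
    ∑ k : Fin N, (if n = (k : ℕ) then f k else 0) = natExtend f n := by
  unfold natExtend
  split_ifs with h
  · rw [Fintype.sum_eq_single ⟨n, h⟩ fun k hk => if_neg fun e => hk (Fin.ext e.symm)]
    simp
  · exact Finset.sum_eq_zero fun k _ => if_neg (by omega)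

lemma sum_ite_val_add_one_eq (f : Fin N → α) (k : Fin N) :
    ∑ j : Fin N, (if (j : ℕ) + 1 = k then f j else 0) = prevValue f k := by
  unfold prevValue
  split_ifs with hk
  · exact Finset.sum_eq_zero fun j _ => if_neg (by omega)
  · rw [← sum_ite_val_eq]
    exact Finset.sum_congr rfl fun j _ => by congr 1; exact propext (by omega)

lemma diffMatrix_mulVec (g : Fin N → α) (k : Fin N) :
    (diffMatrix α N *ᵥ g) k = g k - prevValue g k := by
  simp only [diffMatrix, mulVec, dotProduct, of_apply, sub_mul, ite_mul, one_mul, zero_mul,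
    Finset.sum_sub_distrib, Fintype.sum_ite_eq', sum_ite_val_add_one_eq]

lemma diffMatrix_mulVec_of_val_eq_succ (g : Fin N → α) {k l : Fin N} (h : (k : ℕ) = l + 1) :
    (diffMatrix α N *ᵥ g) k = g k - g l := by
  rw [diffMatrix_mulVec, prevValue, if_neg (by omega), natExtend_of_lt _ (by omega)]
  congr 3
  omega

lemma vecMul_diffMatrix (f : Fin N → α) (j : Fin N) :
    (f ᵥ* diffMatrix α N) j = f j - natExtend f (j + 1) := by
  simp only [diffMatrix, vecMul, dotProduct, of_apply, mul_sub, mul_ite, mul_one, mul_zero,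
    Finset.sum_sub_distrib, Fintype.sum_ite_eq, sum_ite_val_eq]

lemma lowerOnes_mul_diffMatrix : lowerOnes α N * diffMatrix α N = 1 := by
  ext i j
  rw [mul_apply_eq_vecMul, vecMul_diffMatrix, one_apply]
  simp only [lowerOnes, natExtend, of_apply, Fin.ext_iff, Fin.le_def]
  split_ifs <;> first | (exfalso; omega) | simp

lemma diffMatrix_transpose_mul_diagonal_mul_diffMatrix_apply (w : Fin N → α) (l m : Fin N) :
    ((diffMatrix α N)ᵀ * diagonal w * diffMatrix α N) l m =
      if l = m then w l + natExtend w (l + 1)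
      else if (m : ℕ) = l + 1 then -w m
      else if (l : ℕ) = m + 1 then -w l
      else 0 := by
  obtain ⟨l, hl⟩ := l
  obtain ⟨m, hm⟩ := m
  rw [mul_apply_eq_vecMul, vecMul_diffMatrix]
  simp only [mul_diagonal, transpose_apply, diffMatrix, natExtend, of_apply, Fin.ext_iff]
  split_ifs <;> first | (exfalso; omega) | (subst_vars; simp)

end Ring

section MinMatrix

variable [CommRing α] [LinearOrder α]

lemma min_matrix_mul_diffMatrix_transpose {t : Fin N → α} (ht : Monotone t) :
    of (fun l m => min (t l) (t m)) * (diffMatrix α N)ᵀ =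
      lowerOnes α N * diagonal (diffMatrix α N *ᵥ t) := by
  ext l k
  rw [mul_apply_eq_vecMul, vecMul_transpose, diffMatrix_mulVec, mul_diagonal, diffMatrix_mulVec]
  simp only [lowerOnes, prevValue, natExtend, of_apply]
  rcases le_or_gt k l with hkl | hlk
  · rw [if_pos hkl, one_mul, min_eq_right (ht hkl)]
    split_ifs with hk0 hk1
    · rfl
    · rw [min_eq_right (ht (Fin.le_def.mpr (by omega : (k : ℕ) - 1 ≤ l)))]
    · omega
  · have hk0 : (k : ℕ) ≠ 0 := by omega
    rw [if_neg hlk.not_ge, zero_mul, min_eq_left (ht hlk.le), if_neg hk0, dif_pos (by omega),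
      min_eq_left (ht (Fin.le_def.mpr (by omega : (l : ℕ) ≤ k - 1))), sub_self]

end MinMatrix

lemma diffMatrix_mulVec_pos [Ring α] [LinearOrder α] [IsStrictOrderedRing α] {t : Fin N → α}
    (hpos : ∀ i, 0 < t i) (hmono : StrictMono t) (k : Fin N) :
    0 < (diffMatrix α N *ᵥ t) k := by
  rw [diffMatrix_mulVec, prevValue, natExtend, sub_pos]
  split_ifs with hk0 hk1
  · exact hpos k
  · exact hmono (Fin.lt_def.mpr (by simp; omega))
  · omega

lemma inv_min_matrix [Field α] [LinearOrder α] {t : Fin N → α} (ht : Monotone t)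
    (hd : ∀ k, (diffMatrix α N *ᵥ t) k ≠ 0) :
    (of fun l m => min (t l) (t m))⁻¹ =
      (diffMatrix α N)ᵀ * diagonal (diffMatrix α N *ᵥ t)⁻¹ * diffMatrix α N := by
  refine inv_eq_right_inv ?_
  have hdiag : diagonal (diffMatrix α N *ᵥ t) * diagonal (diffMatrix α N *ᵥ t)⁻¹ = 1 := by
    rw [diagonal_mul_diagonal, ← diagonal_one]
    exact congrArg diagonal (funext fun k => mul_inv_cancel₀ (hd k))
  rw [← Matrix.mul_assoc, ← Matrix.mul_assoc, min_matrix_mul_diffMatrix_transpose ht,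
    Matrix.mul_assoc (lowerOnes α N), hdiag, Matrix.mul_one, lowerOnes_mul_diffMatrix]

end

theorem min_matrix_inv_general (N : ℕ) (t : Fin N → ℝ)
    (hpos : ∀ i, 0 < t i) (hmono : StrictMono t) :
    (Matrix.of fun l m : Fin N => min (t l) (t m))⁻¹ =
      Matrix.of (fun l m : Fin N =>
        -- `τ k` is `t k` (with junk value past the end), `p j` is `t (j-1)` with `t₋₁ = 0`
        let τ : ℕ → ℝ := fun k => if hk : k < N then t ⟨k, hk⟩ else 0
        let p : Fin N → ℝ := fun j => if (j : ℕ) = 0 then 0 else τ ((j : ℕ) - 1)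
        if l = m then
          (if (l : ℕ) + 1 = N then 1 / (τ l - p l)
           else (τ ((l : ℕ) + 1) - p l) / ((τ l - p l) * (τ ((l : ℕ) + 1) - τ l)))
        else if (m : ℕ) = (l : ℕ) + 1 then -(1 / (τ m - τ l))
        else if (l : ℕ) = (m : ℕ) + 1 then -(1 / (τ l - τ m))
        else 0) := by
  have hd k := (diffMatrix_mulVec_pos hpos hmono k).ne'
  rw [inv_min_matrix hmono.monotone hd]
  ext l m
  have hτ : ∀ k, (if hk : k < N then t ⟨k, hk⟩ else 0) = natExtend t k := fun _ => rfl
  have hp : ∀ k : Fin N, (if (k : ℕ) = 0 then 0 else natExtend t (k - 1)) = prevValue t k :=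
    fun _ => rfl
  simp only [of_apply, diffMatrix_transpose_mul_diagonal_mul_diffMatrix_apply, hτ, hp,
    natExtend_val, ← diffMatrix_mulVec]
  split_ifs with hlm hlN hml hlm'
  · rw [natExtend_of_le _ hlN.ge, add_zero, one_div, Pi.inv_apply, hlm]
  · subst hlm
    have hl : (l : ℕ) + 1 < N := by omega
    have hsucc : (diffMatrix ℝ N *ᵥ t) ⟨l + 1, hl⟩ = t ⟨l + 1, hl⟩ - t l :=
      diffMatrix_mulVec_of_val_eq_succ t rfl
    have hsum : t ⟨l + 1, hl⟩ - prevValue t l =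
        (diffMatrix ℝ N *ᵥ t) l + (diffMatrix ℝ N *ᵥ t) ⟨l + 1, hl⟩ := by
      rw [hsucc, diffMatrix_mulVec]
      ring
    rw [natExtend_of_lt _ hl, natExtend_of_lt _ hl, Pi.inv_apply, Pi.inv_apply, hsum, ← hsucc,
      inv_add_inv (hd _) (hd _)]
  · rw [Pi.inv_apply, diffMatrix_mulVec_of_val_eq_succ t hml, one_div]
  · rw [Pi.inv_apply, diffMatrix_mulVec_of_val_eq_succ t hlm', one_div]
  · rfl

/-- The inverse of the matrix `R` with entries `R l m = min (t l) (t m)`,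
for `0 < t 0 < t 1 < ... < t (N-1)`, is the symmetric tridiagonal matrix described. -/
theorem min_matrix_inv (N : ℕ) (hN : 2 ≤ N) (t : Fin N → ℝ)
    (hpos : ∀ i, 0 < t i) (hmono : StrictMono t) :
    (Matrix.of fun l m : Fin N => min (t l) (t m))⁻¹ =
      Matrix.of (fun l m : Fin N =>
        -- `τ k` is `t k` (with junk value past the end), `p j` is `t (j-1)` with `t₋₁ = 0`
        let τ : ℕ → ℝ := fun k => if hk : k < N then t ⟨k, hk⟩ else 0
        let p : Fin N → ℝ := fun j => if (j : ℕ) = 0 then 0 else τ ((j : ℕ) - 1)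
        if l = m then
          (if (l : ℕ) + 1 = N then 1 / (τ l - p l)
           else (τ ((l : ℕ) + 1) - p l) / ((τ l - p l) * (τ ((l : ℕ) + 1) - τ l)))
        else if (m : ℕ) = (l : ℕ) + 1 then -(1 / (τ m - τ l))
        else if (l : ℕ) = (m : ℕ) + 1 then -(1 / (τ l - τ m))
        else 0) :=
  min_matrix_inv_general N t hpos hmono
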